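/- For integers m > 1 and indeterminates x, y, q, the quantity K_m(x,y) := ∑_{r=1}^{m} ([r-1]! ((q-1)x - y)^{r-1} q^{-mr} / ∏_{a=1}^{r}(x + [a-1]y)) · e_r(q, ..., q^m) satisfies the recurrence K_m(x,y) = 1/x + K_{m-1}(x+y, qy). -/

import Mathlib

/-!
Write `K_m(x,y) = ∑_r c_r(x,y) q^{-mr} e_r(q,…,q^m)`. Pascal's rule
`e_r(q,…,q^m) = e_r(q,…,q^{m-1}) + q^m e_{r-1}(q,…,q^{m-1})` splits `K_m` into two sums; after
shifting the index of the second one, its `r = 0` term is `c_1 = 1/x`, while the top term of the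
first one vanishes. What is left is the coefficient identity `c_r + c_{r+1} = q^r c_r(x+y, qy)`.
Since `z = (q-1)x - y` is invariant under `(x, y) ↦ (x + y, qy)` and this substitution turns
`∏_{a=1}^{r} (x + [a-1]y)` into `x⁻¹ ∏_{a=1}^{r+1} (x + [a-1]y)`, the identity reduces to
`x + [r]y + [r]z = q^r x`.
-/

noncomputable section

/-- the field of rational functions in the indeterminates `x, y, q` over ℚ -/
abbrev K3 : Type := FractionRing (MvPolynomial (Fin 3) ℚ)

def xv : K3 := algebraMap (MvPolynomial (Fin 3) ℚ) K3 (MvPolynomial.X 0)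
def yv : K3 := algebraMap (MvPolynomial (Fin 3) ℚ) K3 (MvPolynomial.X 1)
def qv : K3 := algebraMap (MvPolynomial (Fin 3) ℚ) K3 (MvPolynomial.X 2)

/-- the q-integer [n] = (1 - q^n)/(1 - q) -/
def qint (n : ℕ) : K3 := (1 - qv ^ n) / (1 - qv)

/-- the q-factorial [k]! with [0]! = 1 -/
def qfact (k : ℕ) : K3 := ∏ a ∈ Finset.range k, qint (a + 1)

/-- K_m(x,y) := ∑_{r=1}^{m} ([r-1]! ((q-1)x-y)^{r-1} q^{-mr} / ∏_{a=1}^{r}(x+[a-1]y))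
      · e_r(q, q², ..., q^m) -/
def Kfun (m : ℕ) (x y : K3) : K3 :=
  ∑ r ∈ Finset.Icc 1 m,
    (qfact (r - 1) * ((qv - 1) * x - y) ^ (r - 1) * (qv ^ (m * r))⁻¹ /
        ∏ a ∈ Finset.Icc 1 r, (x + qint (a - 1) * y)) *
      ∑ T ∈ (Finset.Icc 1 m).powersetCard r, ∏ i ∈ T, qv ^ i

open Finset

theorem Finset.sum_powersetCard_succ_insert_prod {ι R : Type*} [DecidableEq ι] [CommSemiring R]
    {s : Finset ι} {a : ι} (ha : a ∉ s) (f : ι → R) (r : ℕ) :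
    ∑ T ∈ (insert a s).powersetCard (r + 1), ∏ i ∈ T, f i
      = ∑ T ∈ s.powersetCard (r + 1), ∏ i ∈ T, f i
        + f a * ∑ T ∈ s.powersetCard r, ∏ i ∈ T, f i := by
  have notMem {T : Finset ι} (hT : T ∈ s.powersetCard r) : a ∉ T :=
    fun h ↦ ha ((mem_powersetCard.1 hT).1 h)
  rw [powersetCard_succ_insert ha, sum_union, sum_image, mul_sum]
  · exact congrArg _ (sum_congr rfl fun T hT ↦ prod_insert (notMem hT))
  · intro T hT T' hT' h
    simpa [erase_insert (notMem hT), erase_insert (notMem hT')] using congrArg (erase · a) h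
  · refine disjoint_left.2 fun T hT hT' ↦ ?_
    obtain ⟨S, -, rfl⟩ := mem_image.1 hT'
    exact ha ((mem_powersetCard.1 hT).1 (mem_insert_self a S))

lemma algebraMap_mvPolynomial_ne_zero {p : MvPolynomial (Fin 3) ℚ} (hp : p ≠ 0) :
    algebraMap (MvPolynomial (Fin 3) ℚ) K3 p ≠ 0 :=
  (map_ne_zero_iff _ (IsFractionRing.injective _ _)).2 hp

lemma qv_ne_zero : qv ≠ 0 := algebraMap_mvPolynomial_ne_zero (MvPolynomial.X_ne_zero 2)

lemma one_sub_qv_ne_zero : 1 - qv ≠ 0 := by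
  have h : (1 - MvPolynomial.X 2 : MvPolynomial (Fin 3) ℚ) ≠ 0 := fun h ↦ by
    simpa using congrArg (MvPolynomial.eval 0) h
  simpa [qv] using algebraMap_mvPolynomial_ne_zero h

lemma qint_zero : qint 0 = 0 := by simp [qint]

lemma qint_succ (n : ℕ) : qint (n + 1) = 1 + qv * qint n := by
  simp only [qint]
  field_simp [one_sub_qv_ne_zero]
  ring

lemma qint_mul_qv_sub_one (n : ℕ) : qint n * (qv - 1) = qv ^ n - 1 := by
  simp only [qint]
  field_simp [one_sub_qv_ne_zero]
  ring

lemma qfact_succ (k : ℕ) : qfact (k + 1) = qfact k * qint (k + 1) := prod_range_succ _ _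

/-- Multiplied by `1 - q`, `x + [n]y` becomes the nonzero polynomial `(1 - q)x + (1 - q^n)y`. -/
lemma xv_add_qint_mul_yv_ne_zero (n : ℕ) : xv + qint n * yv ≠ 0 := by
  have hpoly : ((1 - MvPolynomial.X 2) * MvPolynomial.X 0
      + (1 - MvPolynomial.X 2 ^ n) * MvPolynomial.X 1 : MvPolynomial (Fin 3) ℚ) ≠ 0 := by
    intro h
    have := congrArg (MvPolynomial.eval fun i ↦ if i = 2 then 0 else 1) h
    rcases n with _ | n <;> simp at this
  have hmul : (1 - qv) * (xv + qint n * yv) = (1 - qv) * xv + (1 - qv ^ n) * yv := by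
    simp only [qint]
    field_simp [one_sub_qv_ne_zero]
  refine fun h ↦ algebraMap_mvPolynomial_ne_zero hpoly ?_
  rw [h, mul_zero] at hmul
  simpa [qv, xv, yv] using hmul.symm

@[to_additive sum_Icc_one_eq_sum_range]
theorem Finset.prod_Icc_one_eq_prod_range {M : Type*} [CommMonoid M] (f : ℕ → M) (n : ℕ) :
    ∏ i ∈ Icc 1 n, f i = ∏ i ∈ range n, f (i + 1) := by
  rw [← Ico_add_one_right_eq_Icc, prod_Ico_eq_prod_range, Nat.add_sub_cancel]
  simp only [add_comm 1]

def qRisingProd (r : ℕ) (x y : K3) : K3 := ∏ a ∈ range r, (x + qint a * y)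

lemma prod_Icc_eq_qRisingProd (r : ℕ) (x y : K3) :
    ∏ a ∈ Icc 1 r, (x + qint (a - 1) * y) = qRisingProd r x y := by
  simp only [prod_Icc_one_eq_prod_range, Nat.add_sub_cancel, qRisingProd]

lemma qRisingProd_succ (r : ℕ) (x y : K3) :
    qRisingProd (r + 1) x y = qRisingProd r x y * (x + qint r * y) := prod_range_succ _ _

lemma qRisingProd_shift (r : ℕ) (x y : K3) :
    qRisingProd r (x + y) (qv * y) * x = qRisingProd (r + 1) x y := by
  simp only [qRisingProd, prod_range_succ' _ r, qint_succ, qint_zero]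
  congr 1
  · exact prod_congr rfl fun a _ ↦ by ring
  · ring

/-- `Kcoeff r x y` is the coefficient `c_{r+1}(x,y)` of the summand `r + 1` of `Kfun`. -/
def Kcoeff (r : ℕ) (x y : K3) : K3 := qfact r * ((qv - 1) * x - y) ^ r / qRisingProd (r + 1) x y

def qEsymm (m r : ℕ) : K3 := ∑ T ∈ (Icc 1 m).powersetCard r, ∏ i ∈ T, qv ^ i

lemma Kfun_eq_sum_range (m : ℕ) (x y : K3) :
    Kfun m x y =
      ∑ r ∈ range m, Kcoeff r x y * (qv ^ (m * (r + 1)))⁻¹ * qEsymm m (r + 1) := by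
  rw [Kfun, Finset.sum_Icc_one_eq_sum_range]
  refine sum_congr rfl fun r _ ↦ ?_
  rw [prod_Icc_eq_qRisingProd, Kcoeff, qEsymm, Nat.add_sub_cancel]
  ring

lemma qEsymm_succ_succ (m r : ℕ) :
    qEsymm (m + 1) (r + 1) = qEsymm m (r + 1) + qv ^ (m + 1) * qEsymm m r := by
  rw [qEsymm, ← insert_Icc_right_eq_Icc_add_one (Nat.le_add_left 1 m)]
  exact sum_powersetCard_succ_insert_prod (by simp) _ r

lemma qEsymm_zero (m : ℕ) : qEsymm m 0 = 1 := by simp [qEsymm]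

lemma qEsymm_self_succ (m : ℕ) : qEsymm m (m + 1) = 0 := by
  rw [qEsymm, powersetCard_eq_empty.2 (by simp), sum_empty]

lemma Kcoeff_zero (x y : K3) : Kcoeff 0 x y = x⁻¹ := by
  simp [Kcoeff, qfact, qRisingProd, qint_zero]

lemma Kcoeff_add_Kcoeff_succ {x y : K3} (h : ∀ a, x + qint a * y ≠ 0) (r : ℕ) :
    Kcoeff r x y + Kcoeff (r + 1) x y = qv ^ (r + 1) * Kcoeff r (x + y) (qv * y) := by
  have hx : x ≠ 0 := by simpa [qint_zero] using h 0
  have hP : qRisingProd (r + 1) x y ≠ 0 := prod_ne_zero_iff.2 fun a _ ↦ h a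
  have hz : (qv - 1) * (x + y) - qv * y = (qv - 1) * x - y := by ring
  have hshift : qRisingProd (r + 1) (x + y) (qv * y) = qRisingProd (r + 2) x y / x := by
    rw [eq_div_iff hx, qRisingProd_shift]
  simp only [Kcoeff, hz, hshift, qfact_succ, qRisingProd_succ (r + 1)]
  have hw : x + y * qint (r + 1) ≠ 0 := by simpa [mul_comm] using h (r + 1)
  field_simp
  linear_combination qfact r * x * ((qv - 1) * x - y) ^ r * qint_mul_qv_sub_one (r + 1)

lemma qv_pow_mul_inv_qv_pow_add (a b : ℕ) : qv ^ a * (qv ^ (b + a))⁻¹ = (qv ^ b)⁻¹ := by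
  rw [pow_add, mul_inv, mul_left_comm, mul_inv_cancel₀ (pow_ne_zero a qv_ne_zero), mul_one]

theorem Kfun_succ {x y : K3} (h : ∀ a, x + qint a * y ≠ 0) (m : ℕ) :
    Kfun (m + 1) x y = x⁻¹ + Kfun m (x + y) (qv * y) := by
  have shifted (r : ℕ) :
      (qv ^ ((m + 1) * (r + 1)))⁻¹ * qv ^ (m + 1) = (qv ^ ((m + 1) * r))⁻¹ := by
    rw [mul_comm, Nat.mul_succ, qv_pow_mul_inv_qv_pow_add]
  calc Kfun (m + 1) x y
      = ∑ r ∈ range (m + 1), Kcoeff r x y * (qv ^ ((m + 1) * (r + 1)))⁻¹ * qEsymm m (r + 1)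
        + ∑ r ∈ range (m + 1), Kcoeff r x y * (qv ^ ((m + 1) * r))⁻¹ * qEsymm m r := by
        rw [Kfun_eq_sum_range, ← sum_add_distrib]
        refine sum_congr rfl fun r _ ↦ ?_
        rw [qEsymm_succ_succ, ← shifted r]
        ring
    _ = ∑ r ∈ range m,
          (Kcoeff r x y + Kcoeff (r + 1) x y) * (qv ^ ((m + 1) * (r + 1)))⁻¹ * qEsymm m (r + 1)
        + x⁻¹ := by
        rw [sum_range_succ _ m, qEsymm_self_succ, sum_range_succ', Kcoeff_zero, qEsymm_zero]
        simp only [add_mul, sum_add_distrib, mul_zero, mul_one, pow_zero, inv_one]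
        ring
    _ = x⁻¹ + Kfun m (x + y) (qv * y) := by
        rw [add_comm, Kfun_eq_sum_range]
        congr 1
        refine sum_congr rfl fun r _ ↦ ?_
        rw [Kcoeff_add_Kcoeff_succ h, mul_comm (qv ^ (r + 1)), mul_assoc _ (qv ^ (r + 1)),
          add_one_mul m, qv_pow_mul_inv_qv_pow_add]

/-- for m > 1, K_m(x,y) = 1/x + K_{m-1}(x+y, qy). -/
theorem stmt5 (m : ℕ) (hm : 1 < m) :
    Kfun m xv yv = xv⁻¹ + Kfun (m - 1) (xv + yv) (qv * yv) := by
  obtain ⟨n, rfl⟩ : ∃ n, m = n + 1 := ⟨m - 1, by omega⟩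
  exact Kfun_succ xv_add_qint_mul_yv_ne_zero n

end
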